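/- Let X be a locally compact Hausdorff space and A a C*-algebra. Let C_b^str(X, M(A)) denote the set of bounded functions b : X → M(A) that are strictly continuous, i.e. for every a ∈ A the maps x ↦ b(x)·a and x ↦ a·b(x) are norm-continuous from X into A. Then C_b^str(X, M(A)) is a C*-algebra under pointwise operations and the supremum norm, and the map Θ that sends b ∈ C_b^str(X, M(A)) to the multiplier of C₀(X,A) acting by pointwise multiplication (so Θ(b)·f and f·Θ(b) are the functions x ↦ b(x)f(x) and x ↦ f(x)b(x), which lie in C₀(X,A) for every f ∈ C₀(X,A)) is an isometric *-isomorphism of C_b^str(X, M(A)) onto the multiplier algebra M(C₀(X,A)); moreover Θ is the unique *-homomorphism C_b^str(X, M(A)) → M(C₀(X,A)) whose restriction to C₀(X,A) (viewed inside C_b^str(X,M(A)) via the inclusion A ⊆ M(A)) is the canonical embedding of C₀(X,A) into its multiplier algebra. (This is the constant-fibre case of the paper's Proposition identifying C_b(M(𝒜)) with M(C₀(𝒜)) for C*-bundles.) -/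

import Mathlib

/-!
A multiplier `T` of `C₀(X, A)` is local: `(T f)(x)` only depends on `f x`. Indeed, if `f x = 0`,
take a bump `e` equal to `a` near `x` and supported where `‖f‖ < ε`; then
`(T f)(x) * a = (T (f * e))(x)` has norm at most `‖T‖ ε ‖a‖`, and a C*-algebra element killed
by right multiplication is zero. So `T` acts fibrewise by `a ↦ (T (φₓ a))(x)`, where `φₓ` is a bump
equal to `1` near `x`; this gives a bounded strictly continuous function inverse to `Θ`.
Conversely, the norm bound upgrades strong continuity of `b` to continuity of `x ↦ b(x) f(x)`,
which is what makes `Θ b` act on `C₀(X, A)`. For uniqueness, a *-homomorphism `Ψ` extending the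
canonical embedding satisfies `Ψ b * f = b f = Θ b * f`, and multipliers are determined by
their products with the algebra.
-/

open scoped MultiplierAlgebra ZeroAtInfty
open Filter Topology Set

namespace CStarRing
variable {B : Type*} [NonUnitalNormedRing B] [StarRing B] [CStarRing B]

theorem eq_of_forall_mul_right_eq {c d : B} (h : ∀ g : B, c * g = d * g) : c = d := by
  rw [← sub_eq_zero, ← mul_star_self_eq_zero_iff, sub_mul, h, sub_self]

theorem eq_of_forall_mul_left_eq {c d : B} (h : ∀ g : B, g * c = g * d) : c = d := by
  rw [← sub_eq_zero, ← star_mul_self_eq_zero_iff, mul_sub, h, sub_self]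

end CStarRing

namespace DoubleCentralizer
variable {B : Type*} [NonUnitalCStarAlgebra B]

theorem fst_mul (m : 𝓜(ℂ, B)) (a b : B) : m.fst (a * b) = m.fst a * b :=
  CStarRing.eq_of_forall_mul_left_eq fun g => by
    rw [← m.central, ← mul_assoc, m.central, mul_assoc]

theorem mul_coe (m : 𝓜(ℂ, B)) (a : B) : m * (a : 𝓜(ℂ, B)) = (m.fst a : 𝓜(ℂ, B)) := by
  ext b
  · simp [fst_mul]
  · simp [m.central]

theorem snd_eq_of_fst_eq {m m' : 𝓜(ℂ, B)} (h : m.fst = m'.fst) : m.snd = m'.snd := by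
  ext a
  exact CStarRing.eq_of_forall_mul_right_eq fun g => by rw [m.central, m'.central, h]

theorem ext_fst {m m' : 𝓜(ℂ, B)} (h : m.fst = m'.fst) : m = m' := by
  ext : 1; exact Prod.ext h (snd_eq_of_fst_eq h)

theorem eq_of_forall_mul_coe_eq {m m' : 𝓜(ℂ, B)} (h : ∀ a : B, m * (a : 𝓜(ℂ, B)) = m' * a) :
    m = m' := by
  refine ext_fst <| ContinuousLinearMap.ext fun a =>
    CStarRing.eq_of_forall_mul_right_eq fun g => ?_
  simpa [fst_mul] using congr($(h a).fst g)

end DoubleCentralizer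

namespace ZeroAtInftyContinuousMap
variable {X E : Type*} [TopologicalSpace X] [NormedAddCommGroup E]

theorem norm_apply_le (f : C₀(X, E)) (x : X) : ‖f x‖ ≤ ‖f‖ :=
  f.toBCF.norm_coe_le_norm x

theorem norm_le {f : C₀(X, E)} {C : ℝ} (hC : 0 ≤ C) : ‖f‖ ≤ C ↔ ∀ x, ‖f x‖ ≤ C :=
  BoundedContinuousFunction.norm_le (f := f.toBCF) hC

variable {𝕜 : Type*} [NontriviallyNormedField 𝕜] [NormedSpace 𝕜 E]

noncomputable def evalCLM (x : X) : C₀(X, E) →L[𝕜] E :=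
  LinearMap.mkContinuous { toFun f := f x, map_add' _ _ := rfl, map_smul' _ _ := rfl } 1
    fun f => (one_mul ‖f‖).symm ▸ norm_apply_le f x

theorem norm_evalCLM_le (x : X) : ‖(evalCLM x : C₀(X, E) →L[𝕜] E)‖ ≤ 1 :=
  LinearMap.mkContinuous_norm_le _ zero_le_one _


end ZeroAtInftyContinuousMap

section OperatorFamily
variable {X 𝕜 E F G : Type*} [TopologicalSpace X] [NontriviallyNormedField 𝕜]
  [NormedAddCommGroup E] [NormedSpace 𝕜 E] [NormedAddCommGroup F] [NormedSpace 𝕜 F]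
  [NormedAddCommGroup G] [NormedSpace 𝕜 G]

def IsBoundedStronglyContinuous (L : X → E →L[𝕜] F) : Prop :=
  (∃ C, ∀ x, ‖L x‖ ≤ C) ∧ ∀ v, Continuous fun x => L x v

namespace IsBoundedStronglyContinuous

theorem exists_nonneg_bound {L : X → E →L[𝕜] F} (hL : IsBoundedStronglyContinuous L) :
    ∃ C, 0 ≤ C ∧ ∀ x, ‖L x‖ ≤ C :=
  let ⟨C, hC⟩ := hL.1
  ⟨max C 0, le_max_right _ _, fun x => (hC x).trans (le_max_left _ _)⟩

theorem continuous_apply {L : X → E →L[𝕜] F} (hL : IsBoundedStronglyContinuous L) {g : X → E}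
    (hg : Continuous g) : Continuous fun x => L x (g x) := by
  obtain ⟨C, -, hC⟩ := hL.exists_nonneg_bound
  refine continuous_iff_continuousAt.2 fun x₀ => ?_
  have hsplit : (fun x => L x (g x)) = fun x => L x (g x - g x₀) + L x (g x₀) := by
    funext x; rw [← map_add, sub_add_cancel]
  have hsmall : Tendsto (fun x => L x (g x - g x₀)) (𝓝 x₀) (𝓝 0) := by
    refine squeeze_zero_norm (fun x => (L x).le_of_opNorm_le (hC x) _) ?_
    simpa using (tendsto_sub_nhds_zero_iff.2 (hg.tendsto x₀)).norm.const_mul C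
  simpa [ContinuousAt, hsplit] using hsmall.add ((hL.2 (g x₀)).tendsto x₀)

theorem add {L M : X → E →L[𝕜] F} (hL : IsBoundedStronglyContinuous L)
    (hM : IsBoundedStronglyContinuous M) : IsBoundedStronglyContinuous fun x => L x + M x :=
  let ⟨C, hC⟩ := hL.1
  let ⟨D, hD⟩ := hM.1
  ⟨⟨C + D, fun x => (norm_add_le _ _).trans (add_le_add (hC x) (hD x))⟩,
    fun v => (hL.2 v).add (hM.2 v)⟩

theorem const_smul {L : X → E →L[𝕜] F} (hL : IsBoundedStronglyContinuous L) (c : 𝕜) :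
    IsBoundedStronglyContinuous fun x => c • L x :=
  let ⟨C, hC⟩ := hL.1
  ⟨⟨‖c‖ * C, fun x =>
      (norm_smul_le _ _).trans (mul_le_mul_of_nonneg_left (hC x) (norm_nonneg c))⟩,
    fun v => (hL.2 v).const_smul c⟩

theorem comp {L : X → F →L[𝕜] G} {M : X → E →L[𝕜] F} (hL : IsBoundedStronglyContinuous L)
    (hM : IsBoundedStronglyContinuous M) : IsBoundedStronglyContinuous fun x => (L x).comp (M x) :=
  let ⟨C, hC0, hC⟩ := hL.exists_nonneg_bound
  let ⟨D, hD⟩ := hM.1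
  ⟨⟨C * D, fun x => (L x).opNorm_comp_le (M x) |>.trans
      (mul_le_mul (hC x) (hD x) (norm_nonneg _) hC0)⟩,
    fun v => hL.continuous_apply (hM.2 v)⟩

theorem const (T : E →L[𝕜] F) : IsBoundedStronglyContinuous fun _ : X => T :=
  ⟨⟨‖T‖, fun _ => le_rfl⟩, fun _ => continuous_const⟩

end IsBoundedStronglyContinuous

namespace ZeroAtInftyContinuousMap

noncomputable def pointwiseCLM {L : X → E →L[𝕜] F} (hL : IsBoundedStronglyContinuous L) :
    C₀(X, E) →L[𝕜] C₀(X, F) :=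
  LinearMap.mkContinuousOfExistsBound
    { toFun f :=
        { toFun x := L x (f x)
          continuous_toFun := hL.continuous_apply f.continuous
          zero_at_infty' := by
            obtain ⟨C, -, hC⟩ := hL.exists_nonneg_bound
            refine squeeze_zero_norm (fun x => (L x).le_of_opNorm_le (hC x) _) ?_
            simpa using (zero_at_infty f).norm.const_mul C }
      map_add' f g := by ext x; simp
      map_smul' c f := by ext x; simp }
    (let ⟨C, hC0, hC⟩ := hL.exists_nonneg_bound
     ⟨C, fun f => (norm_le (by positivity)).2 fun x =>
        (L x).le_of_opNorm_le (hC x) _ |>.trans (by gcongr; exact norm_apply_le f x)⟩)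

theorem norm_pointwiseCLM_le {L : X → E →L[𝕜] F} (hL : IsBoundedStronglyContinuous L) {C : ℝ}
    (hC0 : 0 ≤ C) (hC : ∀ x, ‖L x‖ ≤ C) : ‖pointwiseCLM hL‖ ≤ C :=
  (pointwiseCLM hL).opNorm_le_bound hC0 fun f => (norm_le (by positivity)).2 fun x =>
    (L x).le_of_opNorm_le (hC x) _ |>.trans (by gcongr; exact norm_apply_le f x)

end ZeroAtInftyContinuousMap
end OperatorFamily

theorem exists_bump_of_isOpen {X : Type*} [TopologicalSpace X] [LocallyCompactSpace X]
    [RegularSpace X] {x : X} {U : Set X} (hU : IsOpen U) (hx : x ∈ U) :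
    ∃ φ : C(X, ℝ), HasCompactSupport φ ∧ (∀ y, φ y ∈ Icc (0 : ℝ) 1) ∧
      (∀ᶠ y in 𝓝 x, φ y = 1) ∧ EqOn φ 0 Uᶜ := by
  obtain ⟨K, hKx, hKU, hK⟩ := local_compact_nhds (hU.mem_nhds hx)
  obtain ⟨φ, hφK, hφU, hφ, h01⟩ := exists_continuous_one_zero_of_isCompact hK hU.isClosed_compl
    (disjoint_compl_right_iff_subset.2 hKU)
  exact ⟨φ, hφ, h01, eventually_of_mem hKx hφK, hφU⟩

namespace ZeroAtInftyContinuousMap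

variable {X E : Type*} [TopologicalSpace X] [NormedAddCommGroup E] [NormedSpace ℂ E]

noncomputable def bumpSMulCLM (φ : C(X, ℝ)) (hφ : HasCompactSupport φ)
    (h01 : ∀ y, φ y ∈ Icc (0 : ℝ) 1) : E →L[ℂ] C₀(X, E) :=
  LinearMap.mkContinuous
    { toFun a :=
        { toFun y := (φ y : ℂ) • a
          continuous_toFun := (Complex.continuous_ofReal.comp φ.continuous).smul continuous_const
          zero_at_infty' :=
            ((hφ.comp_left Complex.ofReal_zero).smul_right (f' := fun _ => a)).is_zero_at_infty }
      map_add' a b := by ext y; simp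
      map_smul' c a := by ext y; simp [smul_comm c] }
    1 fun a => by
      refine (norm_le (by positivity)).2 fun y => ?_
      show ‖(φ y : ℂ) • a‖ ≤ 1 * ‖a‖
      rw [norm_smul, Complex.norm_real, Real.norm_of_nonneg (h01 y).1]
      exact mul_le_mul_of_nonneg_right (h01 y).2 (norm_nonneg a)

@[simp]
theorem bumpSMulCLM_apply (φ : C(X, ℝ)) (hφ : HasCompactSupport φ)
    (h01 : ∀ y, φ y ∈ Icc (0 : ℝ) 1) (a : E) (y : X) :
    bumpSMulCLM φ hφ h01 a y = (φ y : ℂ) • a :=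
  rfl

theorem norm_bumpSMulCLM_le (φ : C(X, ℝ)) (hφ : HasCompactSupport φ)
    (h01 : ∀ y, φ y ∈ Icc (0 : ℝ) 1) : ‖(bumpSMulCLM φ hφ h01 : E →L[ℂ] C₀(X, E))‖ ≤ 1 :=
  LinearMap.mkContinuous_norm_le _ zero_le_one _

variable [LocallyCompactSpace X] [RegularSpace X]

noncomputable def localConstCLM (x : X) : E →L[ℂ] C₀(X, E) :=
  have h := (exists_bump_of_isOpen isOpen_univ (mem_univ x)).choose_spec
  bumpSMulCLM _ h.1 h.2.1

theorem eventually_localConstCLM_apply (x : X) (a : E) :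
    ∀ᶠ y in 𝓝 x, localConstCLM x a y = a :=
  (exists_bump_of_isOpen isOpen_univ (mem_univ x)).choose_spec.2.2.1.mono fun y hy => by
    simp only [localConstCLM, bumpSMulCLM_apply, hy, Complex.ofReal_one, one_smul]

@[simp]
theorem localConstCLM_apply_self (x : X) (a : E) : localConstCLM x a x = a :=
  (eventually_localConstCLM_apply x a).self_of_nhds

theorem norm_localConstCLM_le (x : X) : ‖(localConstCLM x : E →L[ℂ] C₀(X, E))‖ ≤ 1 := by
  unfold localConstCLM
  exact norm_bumpSMulCLM_le _ _ _

variable {F : Type*} [NormedAddCommGroup F] [NormedSpace ℂ F]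

noncomputable def fibreCLM (L : C₀(X, E) →L[ℂ] C₀(X, F)) (x : X) : E →L[ℂ] F :=
  (evalCLM x).comp (L.comp (localConstCLM x))

@[simp]
theorem fibreCLM_apply (L : C₀(X, E) →L[ℂ] C₀(X, F)) (x : X) (a : E) :
    fibreCLM L x a = L (localConstCLM x a) x :=
  rfl

theorem norm_fibreCLM_le (L : C₀(X, E) →L[ℂ] C₀(X, F)) (x : X) : ‖fibreCLM L x‖ ≤ ‖L‖ :=
  calc ‖fibreCLM L x‖
      ≤ ‖(evalCLM x : C₀(X, F) →L[ℂ] F)‖ * (‖L‖ * ‖localConstCLM (E := E) x‖) :=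
        (ContinuousLinearMap.opNorm_comp_le _ _).trans
          (mul_le_mul_of_nonneg_left (L.opNorm_comp_le _) (norm_nonneg _))
    _ ≤ 1 * (‖L‖ * 1) := by
        gcongr
        exacts [norm_evalCLM_le x, norm_localConstCLM_le x]
    _ = ‖L‖ := by ring

theorem fibreCLM_apply_of_local {L : C₀(X, E) →L[ℂ] C₀(X, F)}
    (hL : ∀ {f g : C₀(X, E)} {x : X}, f x = g x → L f x = L g x)
    (f : C₀(X, E)) (x : X) : fibreCLM L x (f x) = L f x :=
  hL (localConstCLM_apply_self x (f x))

theorem continuous_fibreCLM_apply {L : C₀(X, E) →L[ℂ] C₀(X, F)}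
    (hL : ∀ {f g : C₀(X, E)} {x : X}, f x = g x → L f x = L g x) (a : E) :
    Continuous fun x => fibreCLM L x a := by
  refine continuous_iff_continuousAt.2 fun x₀ => ?_
  refine (L (localConstCLM x₀ a)).continuous.continuousAt.congr ?_
  filter_upwards [eventually_localConstCLM_apply x₀ a] with y hy
  exact hL (hy.trans (localConstCLM_apply_self y a).symm)

end ZeroAtInftyContinuousMap

namespace DoubleCentralizer
open ZeroAtInftyContinuousMap
variable {X A : Type*} [TopologicalSpace X] [LocallyCompactSpace X] [RegularSpace X]
  [NonUnitalCStarAlgebra A]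

theorem fst_apply_eq_zero (T : 𝓜(ℂ, C₀(X, A))) {f : C₀(X, A)} {x : X} (hf : f x = 0) :
    T.fst f x = 0 := by
  refine CStarRing.eq_of_forall_mul_right_eq fun a => ?_
  rw [zero_mul, ← norm_le_zero_iff]
  have hsmall : ∀ ε > 0, ‖T.fst f x * a‖ ≤ ‖T.fst‖ * ‖a‖ * ε := by
    intro ε hε
    obtain ⟨φ, hφ, h01, hφx, hφU⟩ := exists_bump_of_isOpen
      (isOpen_lt (continuous_norm.comp f.continuous) continuous_const)
      (show ‖f x‖ < ε by simpa [hf])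
    set e := bumpSMulCLM φ hφ h01 a
    have he : ‖f * e‖ ≤ ε * ‖a‖ := by
      refine (norm_le (by positivity)).2 fun y => ?_
      by_cases hy : ‖f y‖ < ε
      · calc ‖f y * (φ y : ℂ) • a‖ = φ y * ‖f y * a‖ := by
              rw [mul_smul_comm, norm_smul, Complex.norm_real, Real.norm_of_nonneg (h01 y).1]
          _ ≤ 1 * (ε * ‖a‖) := mul_le_mul (h01 y).2
              ((norm_mul_le _ _).trans (by gcongr)) (norm_nonneg _) zero_le_one
          _ = ε * ‖a‖ := one_mul _
      · simpa [e, hφU hy] using by positivity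
    calc ‖T.fst f x * a‖ = ‖T.fst (f * e) x‖ := by
          rw [fst_mul, ZeroAtInftyContinuousMap.mul_apply]
          simp [e, hφx.self_of_nhds]
      _ ≤ ‖T.fst‖ * ‖f * e‖ := (norm_apply_le _ x).trans (T.fst.le_opNorm _)
      _ ≤ ‖T.fst‖ * ‖a‖ * ε := by rw [mul_assoc, mul_comm ‖a‖]; gcongr
  have hlim : Tendsto (fun ε => ‖T.fst‖ * ‖a‖ * ε) (𝓝[>] 0) (𝓝 0) := by
    simpa using ((tendsto_id (x := 𝓝 (0 : ℝ))).const_mul (‖T.fst‖ * ‖a‖)).mono_left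
      nhdsWithin_le_nhds
  exact ge_of_tendsto hlim (eventually_nhdsWithin_of_forall hsmall)

theorem fst_apply_congr (T : 𝓜(ℂ, C₀(X, A))) {f g : C₀(X, A)} {x : X} (h : f x = g x) :
    T.fst f x = T.fst g x := by
  rw [← sub_eq_zero, ← ZeroAtInftyContinuousMap.sub_apply, ← map_sub]
  exact fst_apply_eq_zero T (by rw [ZeroAtInftyContinuousMap.sub_apply, h, sub_self])

/-- The right action is the adjoint of the left action of `star T`, so it inherits locality. -/
theorem snd_apply_congr (T : 𝓜(ℂ, C₀(X, A))) {f g : C₀(X, A)} {x : X} (h : f x = g x) :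
    T.snd f x = T.snd g x := by
  have hsnd (k : C₀(X, A)) : T.snd k x = star ((star T).fst (star k) x) := by
    simp [star_fst]
  rw [hsnd, hsnd, fst_apply_congr (star T) (g := star g) (by simp [h])]

end DoubleCentralizer

namespace Stmt5

variable (X : Type*) [TopologicalSpace X] [LocallyCompactSpace X] [T2Space X]
variable (A : Type*) [NonUnitalCStarAlgebra A]

/-- The set of bounded, strictly continuous functions `X → M(A)`. -/
def Sstr : Set (X → 𝓜(ℂ, A)) :=
  {b | (∃ C : ℝ, ∀ x, ‖b x‖ ≤ C) ∧ (∀ a : A, Continuous fun x => (b x).fst a) ∧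
    ∀ a : A, Continuous fun x => (b x).snd a}

/-- `Θ : C_b^str(X, M(A)) → M(C₀(X,A))` is a *-homomorphism (with respect to the
pointwise operations on the domain). -/
def IsStarHom (Θ : ↥(Sstr X A) → 𝓜(ℂ, C₀(X, A))) : Prop :=
  (∀ b b' c : ↥(Sstr X A), (∀ x, c.val x = b.val x + b'.val x) → Θ c = Θ b + Θ b') ∧
    (∀ (z : ℂ) (b c : ↥(Sstr X A)), (∀ x, c.val x = z • b.val x) → Θ c = z • Θ b) ∧
    (∀ b b' c : ↥(Sstr X A), (∀ x, c.val x = b.val x * b'.val x) → Θ c = Θ b * Θ b') ∧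
    ∀ b c : ↥(Sstr X A), (∀ x, c.val x = star (b.val x)) → Θ c = star (Θ b)

/-- The restriction of `Θ` to `C₀(X,A)` (included in `C_b^str(X, M(A))` via `A ⊆ M(A)`)
is the canonical embedding `C₀(X,A) → M(C₀(X,A))`. -/
def ExtendsCanonicalEmbedding (Θ : ↥(Sstr X A) → 𝓜(ℂ, C₀(X, A))) : Prop :=
  ∀ (f : C₀(X, A)) (b : ↥(Sstr X A)),
    (∀ x, b.val x = ((f x : A) : 𝓜(ℂ, A))) → Θ b = ((f : 𝓜(ℂ, C₀(X, A))))

end Stmt5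

namespace Stmt5

variable {X A : Type*} [TopologicalSpace X] [NonUnitalCStarAlgebra A]
open ZeroAtInftyContinuousMap DoubleCentralizer

theorem mem_Sstr_iff {b : X → 𝓜(ℂ, A)} :
    b ∈ Sstr X A ↔ IsBoundedStronglyContinuous (fun x => (b x).fst) ∧
      IsBoundedStronglyContinuous (fun x => (b x).snd) := by
  simp only [Sstr, IsBoundedStronglyContinuous, mem_ofPred_eq, norm_fst, norm_snd]
  tauto

theorem Sstr.add_mem {b b' : X → 𝓜(ℂ, A)} (hb : b ∈ Sstr X A) (hb' : b' ∈ Sstr X A) :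
    b + b' ∈ Sstr X A :=
  mem_Sstr_iff.2 ⟨(mem_Sstr_iff.1 hb).1.add (mem_Sstr_iff.1 hb').1,
    (mem_Sstr_iff.1 hb).2.add (mem_Sstr_iff.1 hb').2⟩

theorem Sstr.smul_mem (z : ℂ) {b : X → 𝓜(ℂ, A)} (hb : b ∈ Sstr X A) : z • b ∈ Sstr X A :=
  mem_Sstr_iff.2 ⟨(mem_Sstr_iff.1 hb).1.const_smul z, (mem_Sstr_iff.1 hb).2.const_smul z⟩

theorem Sstr.mul_mem {b b' : X → 𝓜(ℂ, A)} (hb : b ∈ Sstr X A) (hb' : b' ∈ Sstr X A) :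
    b * b' ∈ Sstr X A :=
  mem_Sstr_iff.2 ⟨(mem_Sstr_iff.1 hb).1.comp (mem_Sstr_iff.1 hb').1,
    (mem_Sstr_iff.1 hb').2.comp (mem_Sstr_iff.1 hb).2⟩

theorem Sstr.star_mem {b : X → 𝓜(ℂ, A)} (hb : b ∈ Sstr X A) : star b ∈ Sstr X A := by
  obtain ⟨⟨C, hC⟩, hfst, hsnd⟩ := hb
  refine ⟨⟨C, fun x => ?_⟩, fun a => ?_, fun a => ?_⟩
  · simpa using hC x
  · simpa [star_fst] using (hsnd (star a)).star
  · simpa [star_snd] using (hfst (star a)).star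

theorem Sstr.one_mem : (1 : X → 𝓜(ℂ, A)) ∈ Sstr X A :=
  mem_Sstr_iff.2 ⟨IsBoundedStronglyContinuous.const 1, IsBoundedStronglyContinuous.const 1⟩

theorem coe_comp_mem_Sstr (f : C₀(X, A)) : (fun x => (f x : 𝓜(ℂ, A))) ∈ Sstr X A :=
  ⟨⟨‖f‖, fun x => by
      rw [← norm_fst, coe_fst]
      exact (ContinuousLinearMap.opNorm_mul_apply_le ℂ A (f x)).trans (norm_apply_le f x)⟩,
    fun _ => f.continuous.mul continuous_const, fun _ => continuous_const.mul f.continuous⟩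

noncomputable def toMultiplier (b : Sstr X A) : 𝓜(ℂ, C₀(X, A)) where
  fst := pointwiseCLM (mem_Sstr_iff.1 b.2).1
  snd := pointwiseCLM (mem_Sstr_iff.1 b.2).2
  central f g := by ext x; exact (b.val x).central (f x) (g x)

@[simp]
theorem toMultiplier_fst_apply (b : Sstr X A) (f : C₀(X, A)) (x : X) :
    (toMultiplier b).fst f x = (b.val x).fst (f x) :=
  rfl

@[simp]
theorem toMultiplier_snd_apply (b : Sstr X A) (f : C₀(X, A)) (x : X) :
    (toMultiplier b).snd f x = (b.val x).snd (f x) :=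
  rfl

section
variable [LocallyCompactSpace X] [RegularSpace X]

noncomputable def ofMultiplier (T : 𝓜(ℂ, C₀(X, A))) (x : X) : 𝓜(ℂ, A) where
  fst := fibreCLM T.fst x
  snd := fibreCLM T.snd x
  central a a' := by
    simpa using congr($(T.central (localConstCLM x a) (localConstCLM x a')) x)

theorem norm_ofMultiplier_le (T : 𝓜(ℂ, C₀(X, A))) (x : X) : ‖ofMultiplier T x‖ ≤ ‖T‖ := by
  rw [← norm_fst, ← norm_fst T]
  exact norm_fibreCLM_le T.fst x

theorem ofMultiplier_mem (T : 𝓜(ℂ, C₀(X, A))) : ofMultiplier T ∈ Sstr X A :=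
  ⟨⟨‖T‖, norm_ofMultiplier_le T⟩, continuous_fibreCLM_apply (fst_apply_congr T),
    continuous_fibreCLM_apply (snd_apply_congr T)⟩

theorem ofMultiplier_toMultiplier (b : Sstr X A) : ofMultiplier (toMultiplier b) = b.val := by
  funext x
  refine ext_fst (ContinuousLinearMap.ext fun a => ?_)
  simp [ofMultiplier]

theorem toMultiplier_ofMultiplier (T : 𝓜(ℂ, C₀(X, A))) :
    toMultiplier ⟨ofMultiplier T, ofMultiplier_mem T⟩ = T := by
  refine ext_fst (ContinuousLinearMap.ext fun f => ?_)
  ext x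
  exact fibreCLM_apply_of_local (fst_apply_congr T) f x

theorem toMultiplier_bijective : Function.Bijective (toMultiplier (X := X) (A := A)) :=
  Function.bijective_iff_has_inverse.2 ⟨fun T => ⟨ofMultiplier T, ofMultiplier_mem T⟩,
    fun b => Subtype.ext (ofMultiplier_toMultiplier b), toMultiplier_ofMultiplier⟩

theorem norm_toMultiplier (b : Sstr X A) : ‖toMultiplier b‖ = ⨆ x, ‖b.val x‖ := by
  obtain ⟨C, hC⟩ := b.2.1
  have hbdd : BddAbove (range fun x => ‖b.val x‖) := ⟨C, forall_mem_range.2 hC⟩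
  have hnn : 0 ≤ ⨆ x, ‖b.val x‖ := Real.iSup_nonneg fun x => norm_nonneg _
  refine le_antisymm ?_ (Real.iSup_le (fun x => ?_) (norm_nonneg _))
  · rw [← norm_fst]
    exact norm_pointwiseCLM_le (mem_Sstr_iff.1 b.2).1 hnn fun x =>
      (norm_fst _).trans_le (le_ciSup hbdd x)
  · simpa only [ofMultiplier_toMultiplier] using norm_ofMultiplier_le (toMultiplier b) x

end

theorem toMultiplier_isStarHom : IsStarHom X A toMultiplier := by
  refine ⟨fun b b' c h => ?_, fun z b c h => ?_, fun b b' c h => ?_, fun b c h => ?_⟩ <;>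
    refine ext_fst (ContinuousLinearMap.ext fun f => ZeroAtInftyContinuousMap.ext fun x => ?_) <;>
    simp [h x, star_fst]

theorem toMultiplier_extends : ExtendsCanonicalEmbedding X A toMultiplier := fun f b h =>
  ext_fst (ContinuousLinearMap.ext fun g => ZeroAtInftyContinuousMap.ext fun x => by simp [h x])

theorem mul_coe_eq_of_isStarHom {Ψ : Sstr X A → 𝓜(ℂ, C₀(X, A))} (hΨ : IsStarHom X A Ψ)
    (hΨe : ExtendsCanonicalEmbedding X A Ψ) (b : Sstr X A) (f : C₀(X, A)) :
    Ψ b * (f : 𝓜(ℂ, C₀(X, A))) = ((toMultiplier b).fst f : 𝓜(ℂ, C₀(X, A))) := by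
  let fM : Sstr X A := ⟨_, coe_comp_mem_Sstr f⟩
  let bf : Sstr X A := ⟨b.val * fM.val, Sstr.mul_mem b.2 fM.2⟩
  rw [← hΨe f fM fun _ => rfl, ← hΨ.2.2.1 b fM bf fun _ => rfl]
  exact hΨe _ bf fun x => mul_coe (b.val x) (f x)

theorem eq_toMultiplier_of_isStarHom {Ψ : Sstr X A → 𝓜(ℂ, C₀(X, A))} (hΨ : IsStarHom X A Ψ)
    (hΨe : ExtendsCanonicalEmbedding X A Ψ) : Ψ = toMultiplier :=
  funext fun b => eq_of_forall_mul_coe_eq fun f => by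
    rw [mul_coe_eq_of_isStarHom hΨ hΨe, mul_coe]

end Stmt5

namespace Stmt5

variable (X : Type*) [TopologicalSpace X] [LocallyCompactSpace X] [T2Space X]
variable (A : Type*) [NonUnitalCStarAlgebra A]

theorem strictlyContinuousBounded_isomorphic_multiplier_of_C0 :
    -- closure under the pointwise operations (and the unit): `C_b^str` is a C*-algebra
    (∀ b ∈ Sstr X A, ∀ b' ∈ Sstr X A, b + b' ∈ Sstr X A) ∧
    (∀ (z : ℂ), ∀ b ∈ Sstr X A, z • b ∈ Sstr X A) ∧
    (∀ b ∈ Sstr X A, ∀ b' ∈ Sstr X A, b * b' ∈ Sstr X A) ∧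
    (∀ b ∈ Sstr X A, star b ∈ Sstr X A) ∧
    ((1 : X → 𝓜(ℂ, A)) ∈ Sstr X A) ∧
    -- the isomorphism `Θ`
    ∃ Θ : ↥(Sstr X A) → 𝓜(ℂ, C₀(X, A)),
      -- `Θ(b)` acts on `C₀(X,A)` by pointwise multiplication
      (∀ (b : ↥(Sstr X A)) (f : C₀(X, A)) (x : X),
        ((Θ b).fst f) x = (b.val x).fst (f x) ∧ ((Θ b).snd f) x = (b.val x).snd (f x)) ∧
      Function.Bijective Θ ∧
      -- `Θ` is isometric for the supremum norm
      (∀ b : ↥(Sstr X A), ‖Θ b‖ = ⨆ x : X, ‖b.val x‖) ∧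
      IsStarHom X A Θ ∧
      ExtendsCanonicalEmbedding X A Θ ∧
      -- uniqueness: any *-homomorphism extending the canonical embedding equals `Θ`
      ∀ Ψ : ↥(Sstr X A) → 𝓜(ℂ, C₀(X, A)),
        IsStarHom X A Ψ → ExtendsCanonicalEmbedding X A Ψ → Ψ = Θ :=
  ⟨fun _ hb _ hb' => Sstr.add_mem hb hb', fun z _ hb => Sstr.smul_mem z hb,
    fun _ hb _ hb' => Sstr.mul_mem hb hb', fun _ hb => Sstr.star_mem hb, Sstr.one_mem,
    toMultiplier, fun b f x => ⟨toMultiplier_fst_apply b f x, toMultiplier_snd_apply b f x⟩,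
    toMultiplier_bijective, norm_toMultiplier,
    toMultiplier_isStarHom, toMultiplier_extends, fun _ => eq_toMultiplier_of_isStarHom⟩

end Stmt5
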